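/- For any δ ≠ 0 and y ∈ ℝ, the function z(r) = log( (4/δ²) e^{√2 (log r − y)/δ} / (1 + e^{√2 (log r − y)/δ})² ) − 2 log r solves -z'' - z'/r = e^z on (0,∞). Moreover, if δ = 1/√2 and y = log(2√2), then lim_{r→0^+} z(r) = 0 and z(r) = -2 log(1 + r²/8). -/

import Mathlib

open Real Filter

/-! In the variable `t = log r` the function `w(t) = z(eᵗ) + 2t` turns the radial equation
`-z'' - z'/r = e^z` into the one-dimensional Liouville equation `-w'' = e^w`
(`r²(z'' + z'/r) = d²/dt² z(eᵗ)` and `r² e^z = e^w`). With `a = √2/δ` the given `w` is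
`log (2a² eˢ / (1 + eˢ)²)` at `s = a(t - y)`, and differentiating twice gives `-w'' = e^w`.
For `δ = 1/√2`, `y = log (2√2)` one has `eˢ = r²/8` and `2a² = 8`, which yields the closed form. -/

def SolvesRadialLiouville (z : ℝ → ℝ) : Prop :=
  ∀ r : ℝ, 0 < r → -(deriv (deriv z) r) - deriv z r / r = exp (z r)

theorem solvesRadialLiouville_comp_log_sub {w w' : ℝ → ℝ} (hw : ∀ t, HasDerivAt w (w' t) t)
    (hw' : ∀ t, HasDerivAt w' (-exp (w t)) t) :
    SolvesRadialLiouville fun r => w (log r) - 2 * log r := by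
  intro r hr
  have hz : ∀ s : ℝ, 0 < s →
      HasDerivAt (fun r => w (log r) - 2 * log r) ((w' (log s) - 2) / s) s := fun s hs =>
    (((hw (log s)).comp s (hasDerivAt_log hs.ne')).sub
      ((hasDerivAt_log hs.ne').const_mul 2)).congr_deriv (by ring)
  have hz' : HasDerivAt (fun s => (w' (log s) - 2) / s)
      ((-exp (w (log r)) * r⁻¹ * r - (w' (log r) - 2) * 1) / r ^ 2) r :=
    (((hw' (log r)).comp r (hasDerivAt_log hr.ne')).sub_const 2).div (hasDerivAt_id r) hr.ne'
  have hdd : deriv (deriv fun r => w (log r) - 2 * log r) r =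
      deriv (fun s => (w' (log s) - 2) / s) r :=
    EventuallyEq.deriv_eq <| by
      filter_upwards [Ioi_mem_nhds hr] with s hs using (hz s hs).deriv
  have hexp : exp (w (log r) - 2 * log r) = exp (w (log r)) / r ^ 2 := by
    rw [exp_sub, mul_comm, exp_mul, exp_log hr, rpow_two]
  rw [hdd, hz'.deriv, (hz r hr).deriv, hexp]
  field_simp
  ring

noncomputable def liouvilleProfile (c s : ℝ) : ℝ := log (c * exp s / (1 + exp s) ^ 2)

theorem liouvilleProfile_eq {c : ℝ} (hc : c ≠ 0) (s : ℝ) :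
    liouvilleProfile c s = log c + s - 2 * log (1 + exp s) := by
  rw [liouvilleProfile, log_div (by positivity) (by positivity), log_mul hc (exp_ne_zero s),
    log_exp, log_pow]
  push_cast
  ring

theorem exp_liouvilleProfile {c : ℝ} (hc : 0 < c) (s : ℝ) :
    exp (liouvilleProfile c s) = c * exp s / (1 + exp s) ^ 2 :=
  exp_log (by positivity)

theorem hasDerivAt_liouvilleProfile {c : ℝ} (hc : c ≠ 0) (s : ℝ) :
    HasDerivAt (liouvilleProfile c) ((1 - exp s) / (1 + exp s)) s := by
  rw [funext (liouvilleProfile_eq hc)]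
  refine (((hasDerivAt_id s).const_add (log c)).sub
    ((((hasDerivAt_exp s).const_add 1).log (by positivity)).const_mul 2)).congr_deriv ?_
  field_simp
  ring

theorem hasDerivAt_one_sub_exp_div_one_add_exp (s : ℝ) :
    HasDerivAt (fun s => (1 - exp s) / (1 + exp s)) (-(2 * exp s / (1 + exp s) ^ 2)) s :=
  (((hasDerivAt_exp s).const_sub 1).div ((hasDerivAt_exp s).const_add 1)
    (by positivity)).congr_deriv (by ring)

theorem hasDerivAt_liouvilleProfile_comp {u : ℝ → ℝ} {a c : ℝ} (hc : c ≠ 0)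
    (hu : ∀ t, HasDerivAt u a t) (t : ℝ) :
    HasDerivAt (fun t => liouvilleProfile c (u t)) (a * ((1 - exp (u t)) / (1 + exp (u t)))) t :=
  ((hasDerivAt_liouvilleProfile hc (u t)).comp t (hu t)).congr_deriv (mul_comm _ _)

theorem hasDerivAt_deriv_liouvilleProfile_comp {u : ℝ → ℝ} {a : ℝ} (ha : a ≠ 0)
    (hu : ∀ t, HasDerivAt u a t) (t : ℝ) :
    HasDerivAt (fun t => a * ((1 - exp (u t)) / (1 + exp (u t))))
      (-exp (liouvilleProfile (2 * a ^ 2) (u t))) t := by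
  rw [exp_liouvilleProfile (by positivity)]
  refine (((hasDerivAt_one_sub_exp_div_one_add_exp (u t)).comp t (hu t)).const_mul a).congr_deriv ?_
  ring

theorem exp_sqrt_two_mul_log_sub_div (r : ℝ) (hr : 0 < r) :
    exp (√2 * (log r - log (2 * √2)) / (1 / √2)) = r ^ 2 / 8 := by
  have h2 : √2 ^ 2 = 2 := sq_sqrt zero_le_two
  have h8 : 2 * √2 * (2 * √2) = 8 := by linear_combination 4 * h2
  have : √2 * (log r - log (2 * √2)) / (1 / √2) = 2 * log r - 2 * log (2 * √2) := by
    field_simp; rw [h2]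
  rw [this, exp_sub, two_mul, two_mul, exp_add, exp_add, exp_log hr, exp_log (by positivity), h8]
  ring

/-- For `δ ≠ 0` and `y ∈ ℝ`, the function
`z(r) = log((4/δ²) e^{√2(log r − y)/δ} / (1 + e^{√2(log r − y)/δ})²) − 2 log r`
solves `-z'' - z'/r = e^z` on `(0,∞)`. Moreover, for `δ = 1/√2` and `y = log(2√2)`,
`z(r) → 0` as `r → 0⁺` and `z(r) = -2 log(1 + r²/8)`. -/
theorem liouville_general_radial (δ y : ℝ) (hδ : δ ≠ 0) (z : ℝ → ℝ)
    (hz : z = fun r : ℝ =>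
      Real.log ((4 / δ ^ 2) * Real.exp (Real.sqrt 2 * (Real.log r - y) / δ) /
        (1 + Real.exp (Real.sqrt 2 * (Real.log r - y) / δ)) ^ 2) - 2 * Real.log r) :
    (∀ r : ℝ, 0 < r → -(deriv (deriv z) r) - deriv z r / r = Real.exp (z r)) ∧
    (δ = 1 / Real.sqrt 2 → y = Real.log (2 * Real.sqrt 2) →
      Tendsto z (nhdsWithin 0 (Set.Ioi 0)) (nhds 0) ∧
      ∀ r : ℝ, 0 < r → z r = -2 * Real.log (1 + r ^ 2 / 8)) := by
  have ha : √2 / δ ≠ 0 := div_ne_zero (by positivity) hδ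
  have hu : ∀ t, HasDerivAt (fun t => √2 * (t - y) / δ) (√2 / δ) t := fun t => by
    simpa using (((hasDerivAt_id t).sub_const y).const_mul √2).div_const δ
  have hc : 4 / δ ^ 2 = 2 * (√2 / δ) ^ 2 := by
    rw [div_pow, sq_sqrt zero_le_two]; ring
  have hzw : z = fun r =>
      liouvilleProfile (2 * (√2 / δ) ^ 2) (√2 * (log r - y) / δ) - 2 * log r := by
    rw [hz, ← hc]; rfl
  refine ⟨hzw ▸ solvesRadialLiouville_comp_log_sub
    (hasDerivAt_liouvilleProfile_comp (by positivity) hu)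
    (hasDerivAt_deriv_liouvilleProfile_comp ha hu), ?_⟩
  rintro rfl rfl
  have hclosed : ∀ r : ℝ, 0 < r → z r = -2 * log (1 + r ^ 2 / 8) := fun r hr => by
    have h8 : 4 / (1 / √2) ^ 2 * (r ^ 2 / 8) = r ^ 2 := by
      rw [div_pow, one_pow, sq_sqrt zero_le_two]; ring
    rw [hz]
    dsimp only
    rw [exp_sqrt_two_mul_log_sub_div r hr, h8, log_div (by positivity) (by positivity),
      log_pow, log_pow]
    push_cast
    ring
  have hlim : Tendsto (fun r : ℝ => -2 * log (1 + r ^ 2 / 8)) (nhds 0) (nhds 0) := by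
    have hcont : Continuous fun r : ℝ => -2 * log (1 + r ^ 2 / 8) := by
      fun_prop (disch := exact fun r => by positivity)
    simpa using hcont.tendsto 0
  exact ⟨(hlim.mono_left nhdsWithin_le_nhds).congr'
    (eventuallyEq_of_mem self_mem_nhdsWithin fun r hr => (hclosed r hr).symm), hclosed⟩
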